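/- Let Q be a connected quandle on n elements, G = Inn(Q), q ∈ Q, H = Stab_G(q), and |Hg| the augmentation as above with h := |H| ∈ G (the inner automorphism S_q). Then h lies in the center of H, G is generated by the conjugates {g⁻¹ h g : g ∈ G} (equivalently by |Hg_1|,...,|Hg_n| for coset representatives g_i), and [G : H] = n. -/

import Mathlib

universe u

/-- A quandle with a *right* self-distributive operation `x ▷ y`, following
Ehrman–Gurpinar–Thibault–Yetter. -/
class RQuandle (Q : Type u) where
  act : Q → Q → Q
  act_self : ∀ x : Q, act x x = x
  act_rinv : ∀ a b : Q, ∃! y, act y a = b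
  act_distrib : ∀ a b c : Q, act (act a b) c = act (act a c) (act b c)

infixl:65 " ▷ " => RQuandle.act

namespace RQuandle

variable {Q : Type u} [RQuandle Q]

/-- The inner automorphism `S_y : x ↦ x ▷ y`, as a permutation of `Q`. -/
noncomputable def SPerm (y : Q) : Equiv.Perm Q :=
  Equiv.ofBijective (fun x => x ▷ y)
    ⟨fun a b h => by
        obtain ⟨c, _, hu⟩ := RQuandle.act_rinv y (b ▷ y)
        exact (hu a h).trans (hu b rfl).symm,
      fun b => (RQuandle.act_rinv y b).exists⟩

@[simp] lemma SPerm_apply (x y : Q) : SPerm y x = x ▷ y := rfl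

/-- The inner automorphism group of a quandle: the subgroup of `Equiv.Perm Q`
generated by the maps `S_y`. -/
def Inn (Q : Type u) [RQuandle Q] : Subgroup (Equiv.Perm Q) :=
  Subgroup.closure (Set.range (SPerm : Q → Equiv.Perm Q))

lemma SPerm_mem_Inn (y : Q) : SPerm y ∈ Inn Q :=
  Subgroup.subset_closure ⟨y, rfl⟩

/-- A quandle is (algebraically) connected when `Inn Q` acts transitively. -/
def Connected (Q : Type u) [RQuandle Q] : Prop :=
  ∀ x y : Q, ∃ p ∈ Inn Q, p x = y

/-- The orbit of `s` under the inner automorphism group. -/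
def orbitSet (s : Q) : Set Q := {t | ∃ p ∈ Inn Q, p s = t}

/-- `f` is an automorphism of the quandle `Q`. -/
def IsQAut (f : Equiv.Perm Q) : Prop := ∀ x y : Q, f (x ▷ y) = f x ▷ f y

/-- Key conjugation identity: in left-to-right (right action) convention this is
`S_{x ▷ y} = S_y⁻¹ S_x S_y`. -/
lemma SPerm_conj (x y : Q) : SPerm (x ▷ y) = SPerm y * SPerm x * (SPerm y)⁻¹ := by
  rw [eq_mul_inv_iff_mul_eq]
  ext u
  simp only [Equiv.Perm.mul_apply, SPerm_apply]
  exact (RQuandle.act_distrib u x y).symm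

/-- Relators for the universal augmentation group `Γ_Q`: `|x ▷ y| = |y|⁻¹ |x| |y|`. -/
def augRels (Q : Type u) [RQuandle Q] : Set (FreeGroup Q) :=
  {w | ∃ x y : Q,
    w = FreeGroup.of (x ▷ y) * ((FreeGroup.of y)⁻¹ * FreeGroup.of x * FreeGroup.of y)⁻¹}

/-- The universal augmentation group `Γ_Q` of a quandle. -/
abbrev Gamma (Q : Type u) [RQuandle Q] := PresentedGroup (augRels Q)

/-- The generator `|x| ∈ Γ_Q`. -/
def gen (x : Q) : Gamma Q := PresentedGroup.of x

/-- The canonical homomorphism `Γ_Q → Aut(Q)` sending `|y|` to `S_y`.  Since the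
paper composes automorphisms as right actions, this is a homomorphism into the
opposite of the permutation group. -/
noncomputable def canHom (Q : Type u) [RQuandle Q] : Gamma Q →* (Equiv.Perm Q)ᵐᵒᵖ :=
  PresentedGroup.toGroup (f := fun y => MulOpposite.op (SPerm y)) (by
    rintro w ⟨x, y, rfl⟩
    simp only [map_mul, map_inv, FreeGroup.lift_apply_of]
    rw [← MulOpposite.op_inv, ← MulOpposite.op_mul, ← MulOpposite.op_mul, SPerm_conj]
    simp [mul_assoc])

@[simp] lemma canHom_gen (y : Q) : canHom Q (gen y) = MulOpposite.op (SPerm y) :=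
  PresentedGroup.toGroup.of _

lemma orbit_act_mem {s x : Q} (y : Q) (hx : x ∈ orbitSet s) : x ▷ y ∈ orbitSet s := by
  obtain ⟨p, hp, rfl⟩ := hx
  exact ⟨SPerm y * p, mul_mem (SPerm_mem_Inn y) hp, rfl⟩

lemma orbit_actinv_mem {s x : Q} (y : Q) (hx : x ∈ orbitSet s) :
    (SPerm y).symm x ∈ orbitSet s := by
  obtain ⟨p, hp, rfl⟩ := hx
  exact ⟨(SPerm y)⁻¹ * p, mul_mem (inv_mem (SPerm_mem_Inn y)) hp, rfl⟩

lemma orbit_mem_iff (t : Q) (y : Q) {u : Q} :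
    u ∈ orbitSet t ↔ u ▷ y ∈ orbitSet t := by
  constructor
  · exact fun h => orbit_act_mem y h
  · intro h
    have := orbit_actinv_mem y h
    rw [← SPerm_apply u y, Equiv.symm_apply_apply] at this
    exact this

/-- Each orbit of `Inn Q` is a subquandle. -/
instance orbitQuandle (s : Q) : RQuandle (orbitSet s) where
  act a b := ⟨a.1 ▷ b.1, orbit_act_mem b.1 a.2⟩
  act_self a := Subtype.ext (RQuandle.act_self a.1)
  act_rinv a b := by
    refine ⟨⟨(SPerm a.1).symm b.1, orbit_actinv_mem a.1 b.2⟩, Subtype.ext ?_, ?_⟩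
    · exact (SPerm a.1).apply_symm_apply b.1
    · rintro ⟨z, hz⟩ h
      apply Subtype.ext
      have hz' : z ▷ a.1 = b.1 := congrArg Subtype.val h
      show z = (SPerm a.1).symm b.1
      rw [← hz']
      exact ((SPerm a.1).symm_apply_apply z).symm
  act_distrib a b c := Subtype.ext (RQuandle.act_distrib a.1 b.1 c.1)

/-- Restriction of `S_x` to the orbit of `t`. -/
noncomputable def phi (t : Q) (x : Q) : Equiv.Perm (orbitSet t) :=
  (SPerm x).subtypePerm (fun u => (orbit_mem_iff t x (u := u)).symm)

/-- The quandle axioms, as a predicate on a binary operation. -/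
def IsRQuandleOp {A : Type u} (op : A → A → A) : Prop :=
  (∀ x, op x x = x) ∧ (∀ a b, ∃! y, op y a = b) ∧
    ∀ a b c, op (op a b) c = op (op a c) (op b c)

end RQuandle


namespace RQuandle
variable {Q : Type u} [RQuandle Q]

/-- `Inn Q` acts on `Q`. -/
instance innAction : MulAction ↥(Inn Q) Q where
  smul p x := (p : Equiv.Perm Q) x
  one_smul _ := rfl
  mul_smul _ _ _ := rfl

/-- The stabilizer of `q` in `G = Inn Q`. -/
def stab (q : Q) : Subgroup ↥(Inn Q) := MulAction.stabilizer ↥(Inn Q) q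

/-- `S_q`, as an element of `G = Inn Q`; this is the augmentation `|H|` of the
trivial coset. -/
noncomputable def hElt (q : Q) : ↥(Inn Q) := ⟨SPerm q, SPerm_mem_Inn q⟩

end RQuandle


/-! Every inner automorphism `g` is a quandle automorphism, hence conjugates `S_q` to
`S_{g q}`. Elements of the stabilizer of `q` therefore commute with `S_q`; by transitivity
every generator `S_y` of `Inn Q` is a conjugate of `S_q`; and the orbit–stabilizer theorem
gives `[G : H] = |Q|`. -/

namespace RQuandle

variable {Q : Type u} [RQuandle Q]

lemma isQAut_of_mem_Inn {p : Equiv.Perm Q} (hp : p ∈ Inn Q) : IsQAut p := by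
  induction hp using Subgroup.closure_induction with
  | mem _ hy =>
    obtain ⟨y, rfl⟩ := hy
    exact fun a b => RQuandle.act_distrib a b y
  | one => exact fun _ _ => rfl
  | mul f g _ _ hf hg => exact fun a b => (congrArg f (hg a b)).trans (hf _ _)
  | inv f _ hf =>
    intro a b
    apply f.injective
    rw [hf, Equiv.Perm.coe_inv, Equiv.apply_symm_apply, Equiv.apply_symm_apply,
      Equiv.apply_symm_apply]

lemma IsQAut.mul_SPerm {f : Equiv.Perm Q} (hf : IsQAut f) (y : Q) :
    f * SPerm y = SPerm (f y) * f := by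
  ext x
  exact hf x y

lemma conj_hElt (g : Inn Q) (q : Q) : g * hElt q * g⁻¹ = hElt (g • q) := by
  rw [mul_inv_eq_iff_eq_mul]
  exact Subtype.ext ((isQAut_of_mem_Inn g.2).mul_SPerm q)

lemma hElt_mem_stab (q : Q) : hElt q ∈ stab q :=
  RQuandle.act_self q

lemma commute_hElt_of_mem_stab {q : Q} {k : Inn Q} (hk : k ∈ stab q) :
    k * hElt q = hElt q * k := by
  rw [← mul_inv_eq_iff_eq_mul, conj_hElt]
  exact congrArg hElt hk

lemma Connected.isPretransitive (hc : Connected Q) : MulAction.IsPretransitive (Inn Q) Q where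
  exists_smul_eq x y := by
    obtain ⟨p, hp, hpx⟩ := hc x y
    exact ⟨⟨p, hp⟩, hpx⟩

lemma Connected.closure_conj_hElt_eq_top (hc : Connected Q) (q : Q) :
    Subgroup.closure {x : Inn Q | ∃ g : Inn Q, x = g⁻¹ * hElt q * g} = ⊤ := by
  refine eq_top_mono (Subgroup.closure_mono ?_)
    (Subgroup.closure_closure_coe_preimage (k := Set.range (SPerm : Q → Equiv.Perm Q)))
  rintro x ⟨y, hy⟩
  obtain ⟨p, hp, hpq⟩ := hc q y
  refine ⟨(⟨p, hp⟩ : Inn Q)⁻¹, ?_⟩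
  rw [inv_inv, conj_hElt]
  exact Subtype.ext (hy.symm.trans (congrArg SPerm hpq.symm))

lemma Connected.index_stab (hc : Connected Q) [Fintype Q] (q : Q) :
    (stab q).index = Fintype.card Q := by
  have := hc.isPretransitive
  rw [stab, MulAction.index_stabilizer_of_transitive, Nat.card_eq_fintype_card]

end RQuandle

open RQuandle in
theorem structure_of_connected {Q : Type u} [RQuandle Q] [Fintype Q]
    (hc : Connected Q) (q : Q) :
    hElt q ∈ stab q ∧ (∀ k ∈ stab q, k * hElt q = hElt q * k) ∧
      Subgroup.closure {x : ↥(Inn Q) | ∃ g : ↥(Inn Q), x = g⁻¹ * hElt q * g} = ⊤ ∧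
      (stab q).index = Fintype.card Q :=
  ⟨hElt_mem_stab q, fun _ hk => commute_hElt_of_mem_stab hk,
    hc.closure_conj_hElt_eq_top q, hc.index_stab q⟩
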